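/- arXiv:1203.4451 — 4 statements merged into one kernel-verified Lean document; each statement's English description precedes it below -/
import Mathlib

section
/- Assume the fixed-point system admits a solution (û, ŵ, v̂, ẑ). Then for any starting point (u⁰, w⁰, v⁰, z⁰), the sequence (uⁿ, wⁿ, vⁿ, zⁿ) generated by the GBPDNA iteration converges to some fixed point (u†, w†, v†, z†) of the iteration, and u† is a minimizer of ‖Au‖₁ over the set {u ∈ ℝ^N : ‖Ku − y‖ ≤ ε}. -/
/-!
Both projections are firmly nonexpansive, and that is all the convergence argument uses about
them. Measured from a fixed point `(û, ŵ, v̂)`, the function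
`‖u - û‖² + ‖w - ŵ‖² - ‖Aᵀ(w - ŵ)‖² + θ⁻¹‖v - v̂‖² - 2⟪K(u - û), r⟫ + c‖r‖²`, with `r = Ku - z`,
dominates the squared distance to the fixed point and, when `‖K‖, ‖A‖ < 1` and `θ ≤ 1`, decreases
at each step by a multiple of `‖Δu‖² + ‖Δw‖² + ‖r‖²`. Hence increments and residuals tend to zero
and the iterates are bounded; a cluster point is a fixed point by continuity, and the same function
measured from it is monotone and tends to zero along a subsequence, hence along the whole sequence.

The limit solves the problem by duality: `Kû = ẑ` gives feasibility, and for feasible `u`,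
`μ‖Aû‖₁ ≤ ⟪Aû, ŵ⟫ = -⟪Kû, v̂⟫ ≤ -⟪Ku, v̂⟫ = ⟪Au, ŵ⟫ ≤ μ‖Au‖₁`: the first two inequalities are the
variational inequalities of the projections in `ŵ = P_μ(ŵ + Aû)` and `ẑ = Q(Kû + v̂)`, the last
one is `‖ŵᵢ‖ ≤ μ`.
-/

open scoped RealInnerProductSpace
open Filter Topology

/-- Componentwise projection `P_λ` on `(ℝ^d)^p`. -/
noncomputable def Pproj {d p : ℕ} (lam : ℝ)
    (w : PiLp 2 (fun _ : Fin p => EuclideanSpace ℝ (Fin d))) :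
    PiLp 2 (fun _ : Fin p => EuclideanSpace ℝ (Fin d)) :=
  WithLp.toLp 2 (fun i => if lam < ‖w i‖ then (lam / ‖w i‖) • w i else w i)

/-- Projection onto the closed `ℓ₂`-ball of radius `ε` centered at `y`. -/
noncomputable def Qproj {m : ℕ} (y : EuclideanSpace ℝ (Fin m)) (eps : ℝ)
    (v : EuclideanSpace ℝ (Fin m)) : EuclideanSpace ℝ (Fin m) :=
  if eps < ‖v - y‖ then y + (eps / ‖v - y‖) • (v - y) else v

section FirmlyNonexpansive

variable {H : Type*} [NormedAddCommGroup H] [InnerProductSpace ℝ H]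

def FirmlyNonexpansive (T : H → H) : Prop :=
  ∀ x y, ‖T x - T y‖ ^ 2 ≤ ⟪T x - T y, x - y⟫

theorem FirmlyNonexpansive.lipschitzWith {T : H → H} (hT : FirmlyNonexpansive T) :
    LipschitzWith 1 T := by
  refine LipschitzWith.of_dist_le_mul fun x y => ?_
  rw [dist_eq_norm, dist_eq_norm, NNReal.coe_one, one_mul]
  have h := (hT x y).trans (real_inner_le_norm _ _)
  nlinarith [norm_nonneg (T x - T y), norm_nonneg (x - y)]

theorem FirmlyNonexpansive.continuous {T : H → H} (hT : FirmlyNonexpansive T) : Continuous T :=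
  hT.lipschitzWith.continuous

theorem FirmlyNonexpansive.piLp {ι : Type*} [Fintype ι] {β : ι → Type*}
    [∀ i, NormedAddCommGroup (β i)] [∀ i, InnerProductSpace ℝ (β i)] {T : ∀ i, β i → β i}
    (hT : ∀ i, FirmlyNonexpansive (T i)) :
    FirmlyNonexpansive fun x : PiLp 2 β => WithLp.toLp 2 fun i => T i (x i) := by
  intro x y
  rw [PiLp.norm_sq_eq_of_L2, PiLp.inner_apply]
  exact Finset.sum_le_sum fun i _ => by simpa using hT i (x i) (y i)

end FirmlyNonexpansive

section BallProjection

variable {H : Type*} [NormedAddCommGroup H] [InnerProductSpace ℝ H]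

noncomputable def ballProj (y : H) (r : ℝ) (v : H) : H :=
  if r < ‖v - y‖ then y + (r / ‖v - y‖) • (v - y) else v

variable {r : ℝ}

theorem norm_ballProj_sub_le (y : H) (hr : 0 ≤ r) (v : H) : ‖ballProj y r v - y‖ ≤ r := by
  unfold ballProj
  split_ifs with h
  · rw [add_sub_cancel_left, norm_smul, Real.norm_of_nonneg (by positivity),
      div_mul_cancel₀ _ (hr.trans_lt h).ne']
  · exact not_lt.mp h

theorem inner_sub_ballProj_nonpos (y : H) (hr : 0 ≤ r) (v : H) {c : H} (hc : ‖c - y‖ ≤ r) :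
    ⟪v - ballProj y r v, c - ballProj y r v⟫ ≤ 0 := by
  unfold ballProj
  split_ifs with h
  · set s := ‖v - y‖
    have hs : 0 < s := hr.trans_lt h
    have hv : v - (y + (r / s) • (v - y)) = (1 - r / s) • (v - y) := by
      rw [sub_smul, one_smul]; abel
    have hc' : c - (y + (r / s) • (v - y)) = (c - y) - (r / s) • (v - y) := by abel
    have hcs : ⟪v - y, c - y⟫ ≤ s * r :=
      (real_inner_le_norm _ _).trans (mul_le_mul_of_nonneg_left hc hs.le)
    have hcoef : 0 ≤ 1 - r / s := by rw [sub_nonneg, div_le_one hs]; exact h.le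
    rw [hv, hc', real_inner_smul_left, inner_sub_right, real_inner_smul_right,
      real_inner_self_eq_norm_sq]
    have : r / s * s ^ 2 = s * r := by field_simp
    nlinarith
  · simp

theorem firmlyNonexpansive_ballProj (y : H) (hr : 0 ≤ r) :
    FirmlyNonexpansive (ballProj y r) := by
  intro v₁ v₂
  have h₁ := inner_sub_ballProj_nonpos y hr v₁ (norm_ballProj_sub_le y hr v₂)
  have h₂ := inner_sub_ballProj_nonpos y hr v₂ (norm_ballProj_sub_le y hr v₁)
  rw [← real_inner_self_eq_norm_sq]
  have key : ⟪ballProj y r v₁ - ballProj y r v₂, v₁ - v₂⟫ - ⟪ballProj y r v₁ - ballProj y r v₂,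
      ballProj y r v₁ - ballProj y r v₂⟫ =
      -⟪v₁ - ballProj y r v₁, ballProj y r v₂ - ballProj y r v₁⟫ -
        ⟪v₂ - ballProj y r v₂, ballProj y r v₁ - ballProj y r v₂⟫ := by
    simp only [inner_sub_left, inner_sub_right, real_inner_comm]; ring
  linarith

theorem mul_norm_le_inner_of_ballProj_add_eq (hr : 0 ≤ r) {p x : H}
    (h : ballProj 0 r (p + x) = p) : r * ‖x‖ ≤ ⟪x, p⟫ := by
  rcases eq_or_ne x 0 with rfl | hx
  · simp
  have hx' : 0 < ‖x‖ := norm_pos_iff.mpr hx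
  have hc : ‖(r / ‖x‖) • x - 0‖ ≤ r := by
    rw [sub_zero, norm_smul, Real.norm_of_nonneg (by positivity), div_mul_cancel₀ _ hx'.ne']
  have hvar := inner_sub_ballProj_nonpos 0 hr (p + x) hc
  rw [h, add_sub_cancel_left, inner_sub_right, real_inner_smul_right,
    real_inner_self_eq_norm_sq] at hvar
  have : r / ‖x‖ * ‖x‖ ^ 2 = r * ‖x‖ := by field_simp
  linarith

theorem Pproj_eq_ballProj {p d : ℕ} (mu : ℝ) :
    Pproj (p := p) (d := d) mu = fun w => WithLp.toLp 2 fun i => ballProj 0 mu (w i) := by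
  funext w
  simp [Pproj, ballProj]

theorem Qproj_eq_ballProj {m : ℕ} (y : EuclideanSpace ℝ (Fin m)) (eps : ℝ) :
    Qproj y eps = ballProj y eps :=
  rfl

theorem firmlyNonexpansive_Pproj {p d : ℕ} {mu : ℝ} (hmu : 0 ≤ mu) :
    FirmlyNonexpansive (Pproj (p := p) (d := d) mu) := by
  rw [Pproj_eq_ballProj]
  exact FirmlyNonexpansive.piLp fun _ => firmlyNonexpansive_ballProj 0 hmu

theorem mul_sum_norm_le_inner_of_Pproj_add_eq {p d : ℕ} {mu : ℝ} (hmu : 0 ≤ mu)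
    {q x : PiLp 2 (fun _ : Fin p => EuclideanSpace ℝ (Fin d))} (h : Pproj mu (q + x) = q) :
    mu * ∑ i, ‖x i‖ ≤ ⟪x, q⟫ := by
  rw [PiLp.inner_apply, Finset.mul_sum]
  refine Finset.sum_le_sum fun i _ => mul_norm_le_inner_of_ballProj_add_eq hmu ?_
  simpa [Pproj_eq_ballProj] using congrArg (· i) h

theorem inner_le_mul_sum_norm_of_Pproj {p d : ℕ} {mu : ℝ} (hmu : 0 ≤ mu)
    (q x : PiLp 2 (fun _ : Fin p => EuclideanSpace ℝ (Fin d))) :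
    ⟪x, Pproj mu q⟫ ≤ mu * ∑ i, ‖x i‖ := by
  rw [PiLp.inner_apply, Finset.mul_sum]
  refine Finset.sum_le_sum fun i _ => ?_
  have h := norm_ballProj_sub_le (0 : EuclideanSpace ℝ (Fin d)) hmu (q i)
  rw [sub_zero] at h
  calc ⟪x i, Pproj mu q i⟫ ≤ ‖x i‖ * ‖Pproj mu q i‖ := real_inner_le_norm _ _
    _ ≤ ‖x i‖ * mu := by gcongr; simpa [Pproj_eq_ballProj] using h
    _ = mu * ‖x i‖ := mul_comm _ _

end BallProjection

section Sequences

variable {X : Type*} [SeminormedAddCommGroup X]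

theorem norm_le_sqrt_div_of_mul_sq_le {C M : ℝ} (hC : 0 < C) {x : X} (h : C * ‖x‖ ^ 2 ≤ M) :
    ‖x‖ ≤ √(M / C) := by
  simpa only [abs_norm] using Real.abs_le_sqrt ((le_div_iff₀' hC).2 h)

theorem tendsto_zero_of_mul_sq_norm_le {C : ℝ} (hC : 0 < C) {x : ℕ → X} {g : ℕ → ℝ}
    (hx : ∀ n, C * ‖x n‖ ^ 2 ≤ g n) (hg : Tendsto g atTop (𝓝 0)) :
    Tendsto x atTop (𝓝 0) := by
  rw [tendsto_zero_iff_norm_tendsto_zero]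
  refine squeeze_zero (fun n => norm_nonneg _)
    (fun n => norm_le_sqrt_div_of_mul_sq_le hC (hx n)) ?_
  simpa using (hg.div_const C).sqrt

theorem isBounded_range_of_mul_sq_norm_sub_le {C M : ℝ} (hC : 0 < C) {x : ℕ → X} (a : X)
    (hx : ∀ n, C * ‖x n - a‖ ^ 2 ≤ M) : Bornology.IsBounded (Set.range x) :=
  (Metric.isBounded_closedBall (x := a) (r := √(M / C))).subset <| Set.range_subset_iff.2
    fun n => by
      rw [Metric.mem_closedBall, dist_eq_norm]
      exact norm_le_sqrt_div_of_mul_sq_le hC (hx n)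

theorem sq_norm_prod_le {Y : Type*} [SeminormedAddCommGroup Y] (x : X) (y : Y) :
    ‖(x, y)‖ ^ 2 ≤ ‖x‖ ^ 2 + ‖y‖ ^ 2 := by
  rw [Prod.norm_def, max_def]
  split_ifs <;> nlinarith [sq_nonneg ‖x‖, sq_nonneg ‖y‖]

end Sequences

section Lyapunov

variable {E F G : Type*} [NormedAddCommGroup E] [InnerProductSpace ℝ E]
  [NormedAddCommGroup F] [InnerProductSpace ℝ F] [NormedAddCommGroup G] [InnerProductSpace ℝ G]
  (K : E →L[ℝ] F) (A : E →L[ℝ] G)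

theorem sq_norm_apply_le (x : E) : ‖K x‖ ^ 2 ≤ ‖K‖ ^ 2 * ‖x‖ ^ 2 := by
  rw [← mul_pow]
  exact pow_le_pow_left₀ (norm_nonneg _) (K.le_opNorm x) 2

theorem two_mul_inner_apply_le {t : ℝ} (ht : 0 < t) (x : E) (r : F) :
    2 * ⟪K x, r⟫ ≤ t * ‖r‖ ^ 2 + ‖K‖ ^ 2 / t * ‖x‖ ^ 2 := by
  have hcs := real_inner_le_norm (K x) r
  have hK := div_le_div_of_nonneg_right (sq_norm_apply_le K x) ht.le
  have hsq : t * ‖r‖ ^ 2 + ‖K x‖ ^ 2 / t - 2 * (‖K x‖ * ‖r‖) = (t * ‖r‖ - ‖K x‖) ^ 2 / t := by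
    field_simp; ring
  have : 0 ≤ (t * ‖r‖ - ‖K x‖) ^ 2 / t := by positivity
  rw [div_mul_eq_mul_div]
  linarith

noncomputable def lyapunovRate : ℝ :=
  min (1 - ‖K‖ ^ 2) (1 - ‖A‖ ^ 2) / 4

variable {K A} in
theorem lyapunovRate_pos (hK : ‖K‖ < 1) (hA : ‖A‖ < 1) : 0 < lyapunovRate K A := by
  have hK2 : ‖K‖ ^ 2 < 1 := by nlinarith [norm_nonneg K]
  have hA2 : ‖A‖ ^ 2 < 1 := by nlinarith [norm_nonneg A]
  exact div_pos (lt_min (by linarith) (by linarith)) four_pos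

variable {K A} in
/-- The weights `t = (1 + ‖K‖²) / 2` and `c = (3 + ‖K‖²) / 4` used below satisfy
`‖K‖² < t < c < 1`, and `lyapunovRate K A` bounds the resulting coefficients from below. -/
theorem lyapunovRate_le (hK : ‖K‖ < 1) (hA : ‖A‖ < 1) :
    lyapunovRate K A ≤ 1 - ‖K‖ ^ 2 / ((1 + ‖K‖ ^ 2) / 2) ∧
      lyapunovRate K A ≤ 1 - ‖A‖ ^ 2 ∧
      lyapunovRate K A ≤ (3 + ‖K‖ ^ 2) / 4 - (1 + ‖K‖ ^ 2) / 2 := by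
  have hpos := lyapunovRate_pos hK hA
  have hK2 : ‖K‖ ^ 2 < 1 := by nlinarith [norm_nonneg K]
  have hcoef : 1 - ‖K‖ ^ 2 / ((1 + ‖K‖ ^ 2) / 2) = (1 - ‖K‖ ^ 2) / (1 + ‖K‖ ^ 2) := by
    field_simp; ring
  have hcoef' : (1 - ‖K‖ ^ 2) / 2 ≤ (1 - ‖K‖ ^ 2) / (1 + ‖K‖ ^ 2) :=
    div_le_div_of_nonneg_left (by linarith) (by positivity) (by linarith)
  have hmin := min_le_left (1 - ‖K‖ ^ 2) (1 - ‖A‖ ^ 2)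
  have hmin' := min_le_right (1 - ‖K‖ ^ 2) (1 - ‖A‖ ^ 2)
  unfold lyapunovRate at hpos ⊢
  refine ⟨?_, ?_, ?_⟩ <;> linarith

variable [CompleteSpace E] [CompleteSpace G]

theorem sq_norm_adjoint_apply_le (w : G) : ‖A.adjoint w‖ ^ 2 ≤ ‖A‖ ^ 2 * ‖w‖ ^ 2 := by
  simpa only [LinearIsometryEquiv.norm_map] using sq_norm_apply_le A.adjoint w

/-- The Lyapunov function of the iteration, evaluated at the errors `u - û`, `w - ŵ`, `v - v̂`
and at the residual `r = K u - z`. -/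
noncomputable def lyapunov (θ c : ℝ) (u : E) (w : G) (v r : F) : ℝ :=
  ‖u‖ ^ 2 + ‖w‖ ^ 2 - ‖A.adjoint w‖ ^ 2 + θ⁻¹ * ‖v‖ ^ 2 - 2 * ⟪K u, r⟫ + c * ‖r‖ ^ 2

theorem continuous_lyapunov (θ c : ℝ) :
    Continuous fun x : E × G × F × F => lyapunov K A θ c x.1 x.2.1 x.2.2.1 x.2.2.2 := by
  unfold lyapunov
  fun_prop

theorem lyapunov_lower_bound {θ c t : ℝ} (hθ0 : 0 < θ) (hθ1 : θ ≤ 1) (ht : 0 < t)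
    (u : E) (w : G) (v r : F) :
    (1 - ‖K‖ ^ 2 / t) * ‖u‖ ^ 2 + (1 - ‖A‖ ^ 2) * ‖w‖ ^ 2 + ‖v‖ ^ 2 + (c - t) * ‖r‖ ^ 2
      ≤ lyapunov K A θ c u w v r := by
  have hA := sq_norm_adjoint_apply_le A w
  have hK := two_mul_inner_apply_le K ht u r
  have hv : ‖v‖ ^ 2 ≤ θ⁻¹ * ‖v‖ ^ 2 :=
    le_mul_of_one_le_left (sq_nonneg _) ((one_le_inv₀ hθ0).mpr hθ1)
  unfold lyapunov
  linarith

theorem lyapunovRate_mul_le_lyapunov (hK : ‖K‖ < 1) (hA : ‖A‖ < 1) {θ : ℝ} (hθ0 : 0 < θ)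
    (hθ1 : θ ≤ 1) (u : E) (w : G) (v r : F) :
    lyapunovRate K A * ‖(u, w, v)‖ ^ 2 ≤ lyapunov K A θ ((3 + ‖K‖ ^ 2) / 4) u w v r := by
  obtain ⟨hu, hw, hr⟩ := lyapunovRate_le hK hA
  have hκ := lyapunovRate_pos hK hA
  have h := lyapunov_lower_bound K A (c := (3 + ‖K‖ ^ 2) / 4) hθ0 hθ1
    (by positivity : 0 < (1 + ‖K‖ ^ 2) / 2) u w v r
  have hprod := (sq_norm_prod_le u (w, v)).trans (add_le_add le_rfl (sq_norm_prod_le w v))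
  nlinarith [mul_le_mul_of_nonneg_right hu (sq_nonneg ‖u‖),
    mul_le_mul_of_nonneg_right hw (sq_nonneg ‖w‖), sq_nonneg ‖r‖, sq_nonneg ‖v‖]

noncomputable def orbitLyapunov (K : E →L[ℝ] F) (A : E →L[ℝ] G) (θ : ℝ) (uh : E) (wh : G)
    (vh : F) (u : ℕ → E) (w : ℕ → G) (v z : ℕ → F) (n : ℕ) : ℝ :=
  lyapunov K A θ ((3 + ‖K‖ ^ 2) / 4) (u n - uh) (w n - wh) (v n - vh) (K (u n) - z n)

variable {K A} {θ : ℝ} {uh : E} {wh : G} {vh : F} {u : ℕ → E} {w : ℕ → G} {v z : ℕ → F}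

theorem lyapunovRate_mul_le_orbitLyapunov (hK : ‖K‖ < 1) (hA : ‖A‖ < 1) (hθ0 : 0 < θ)
    (hθ1 : θ ≤ 1) (n : ℕ) :
    lyapunovRate K A * ‖(u n, w n, v n) - (uh, wh, vh)‖ ^ 2
      ≤ orbitLyapunov K A θ uh wh vh u w v z n :=
  lyapunovRate_mul_le_lyapunov K A hK hA hθ0 hθ1 _ _ _ _

theorem orbitLyapunov_nonneg (hK : ‖K‖ < 1) (hA : ‖A‖ < 1) (hθ0 : 0 < θ) (hθ1 : θ ≤ 1)
    (n : ℕ) : 0 ≤ orbitLyapunov K A θ uh wh vh u w v z n :=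
  (mul_nonneg (lyapunovRate_pos hK hA).le (sq_nonneg _)).trans
    (lyapunovRate_mul_le_orbitLyapunov hK hA hθ0 hθ1 n)

variable (K A) [CompleteSpace F]

/-- The hypotheses are the updates of `u` and `v` and the firm nonexpansiveness of `P` and `Q`
between the iterate and the fixed point, all written in the error variables. -/
theorem lyapunov_step {θ c t : ℝ} (hθ : 0 < θ) (ht : 0 < t) {u u' : E} {w w' : G}
    {v v' r r' : F}
    (hu : u' - u = -K.adjoint (v + r) - A.adjoint w')
    (hw : ‖w'‖ ^ 2 ≤ ⟪w', w + A (u' + A.adjoint (w' - w))⟫)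
    (hz : ‖K u' - r'‖ ^ 2 ≤ ⟪K u' - r', K u' + v⟫)
    (hv : v' = v + θ • r') :
    lyapunov K A θ c u' w' v' r' + (1 - ‖K‖ ^ 2 / t) * ‖u' - u‖ ^ 2
        + (1 - ‖A‖ ^ 2) * ‖w' - w‖ ^ 2 + (c - t) * ‖r‖ ^ 2 + (2 - θ - c) * ‖r'‖ ^ 2
      ≤ lyapunov K A θ c u w v r := by
  have hu_sq : ‖u‖ ^ 2 = ‖u'‖ ^ 2 - 2 * ⟪u', u' - u⟫ + ‖u' - u‖ ^ 2 := by
    rw [← norm_sub_sq_real, sub_sub_cancel]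
  have hu_inner : ⟪u', u' - u⟫ = -⟪K u', v⟫ - ⟪K u', r⟫ - ⟪A u', w'⟫ := by
    rw [hu, inner_sub_right, inner_neg_right, ContinuousLinearMap.adjoint_inner_right,
      ContinuousLinearMap.adjoint_inner_right, inner_add_right]
    ring
  have hw_sq : ‖w‖ ^ 2 = ‖w'‖ ^ 2 - 2 * ⟪w', w' - w⟫ + ‖w' - w‖ ^ 2 := by
    rw [← norm_sub_sq_real, sub_sub_cancel]
  have hAw_sq : ‖A.adjoint w‖ ^ 2 = ‖A.adjoint w'‖ ^ 2
      - 2 * ⟪A.adjoint w', A.adjoint (w' - w)⟫ + ‖A.adjoint (w' - w)‖ ^ 2 := by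
    rw [← norm_sub_sq_real, ← map_sub, sub_sub_cancel]
  have hw_inner : ⟪w', w' - w⟫ ≤ ⟪A u', w'⟫ + ⟪A.adjoint w', A.adjoint (w' - w)⟫ := by
    rw [map_add, inner_add_right, inner_add_right, real_inner_comm (A u') w',
      ← ContinuousLinearMap.adjoint_inner_left] at hw
    rw [inner_sub_right, real_inner_self_eq_norm_sq]
    linarith
  have hv_sq : θ⁻¹ * ‖v'‖ ^ 2 = θ⁻¹ * ‖v‖ ^ 2 + 2 * ⟪v, r'⟫ + θ * ‖r'‖ ^ 2 := by
    rw [hv, norm_add_sq_real, real_inner_smul_right, norm_smul, Real.norm_of_nonneg hθ.le]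
    field_simp
  have hz_inner : ‖r'‖ ^ 2 + ⟪v, r'⟫ ≤ ⟪K u', r'⟫ + ⟪K u', v⟫ := by
    rw [norm_sub_sq_real, inner_sub_left, inner_add_right, inner_add_right,
      real_inner_self_eq_norm_sq] at hz
    linarith [real_inner_comm r' (K u'), real_inner_comm r' v]
  have hyoung := two_mul_inner_apply_le K ht (u - u') r
  rw [map_sub, inner_sub_left, norm_sub_rev] at hyoung
  have hA := sq_norm_adjoint_apply_le A (w' - w)
  unfold lyapunov
  linarith

theorem lyapunov_descent (hK : ‖K‖ < 1) (hA : ‖A‖ < 1) {θ : ℝ} (hθ0 : 0 < θ) (hθ1 : θ ≤ 1)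
    {u u' : E} {w w' : G} {v v' r r' : F}
    (hu : u' - u = -K.adjoint (v + r) - A.adjoint w')
    (hw : ‖w'‖ ^ 2 ≤ ⟪w', w + A (u' + A.adjoint (w' - w))⟫)
    (hz : ‖K u' - r'‖ ^ 2 ≤ ⟪K u' - r', K u' + v⟫)
    (hv : v' = v + θ • r') :
    lyapunov K A θ ((3 + ‖K‖ ^ 2) / 4) u' w' v' r' + lyapunovRate K A * ‖(u' - u, w' - w, r)‖ ^ 2
      ≤ lyapunov K A θ ((3 + ‖K‖ ^ 2) / 4) u w v r := by
  obtain ⟨hcu, hcw, hcr⟩ := lyapunovRate_le hK hA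
  have hκ := lyapunovRate_pos hK hA
  have h := lyapunov_step K A (c := (3 + ‖K‖ ^ 2) / 4) hθ0
    (by positivity : 0 < (1 + ‖K‖ ^ 2) / 2) hu hw hz hv
  have hprod := (sq_norm_prod_le (u' - u) (w' - w, r)).trans
    (add_le_add le_rfl (sq_norm_prod_le (w' - w) r))
  have hK2 : ‖K‖ ^ 2 < 1 := by nlinarith [norm_nonneg K]
  have hr' : 0 ≤ (2 - θ - (3 + ‖K‖ ^ 2) / 4) * ‖r'‖ ^ 2 :=
    mul_nonneg (by linarith) (sq_nonneg _)
  nlinarith [mul_le_mul_of_nonneg_right hcu (sq_nonneg ‖u' - u‖),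
    mul_le_mul_of_nonneg_right hcw (sq_nonneg ‖w' - w‖),
    mul_le_mul_of_nonneg_right hcr (sq_nonneg ‖r‖)]

end Lyapunov

namespace GBPDNA

section Complete

variable {E F G : Type*} [NormedAddCommGroup E] [InnerProductSpace ℝ E] [CompleteSpace E]
  [NormedAddCommGroup F] [InnerProductSpace ℝ F] [CompleteSpace F]
  [NormedAddCommGroup G] [InnerProductSpace ℝ G] [CompleteSpace G]

structure IsOrbit (K : E →L[ℝ] F) (A : E →L[ℝ] G) (P : G → G) (Q : F → F) (θ : ℝ)
    (u ubar : ℕ → E) (w : ℕ → G) (v z : ℕ → F) : Prop where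
  ubar_succ : ∀ n, ubar (n + 1) = u n - K.adjoint (v n + K (u n) - z n) - A.adjoint (w n)
  w_succ : ∀ n, w (n + 1) = P (w n + A (ubar (n + 1)))
  u_succ : ∀ n, u (n + 1) = u n - K.adjoint (v n + K (u n) - z n) - A.adjoint (w (n + 1))
  z_succ : ∀ n, z (n + 1) = Q (K (u (n + 1)) + v n)
  v_succ : ∀ n, v (n + 1) = v n + θ • (K (u (n + 1)) - z (n + 1))

/-- A fixed point `(û, ŵ, v̂, ẑ)` of the iteration, with `ẑ = K û` substituted. -/
structure IsFixedPoint (K : E →L[ℝ] F) (A : E →L[ℝ] G) (P : G → G) (Q : F → F)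
    (uh : E) (wh : G) (vh : F) : Prop where
  w_eq : wh = P (wh + A uh)
  z_eq : K uh = Q (K uh + vh)
  adjoint_eq : K.adjoint vh + A.adjoint wh = 0

variable {K : E →L[ℝ] F} {A : E →L[ℝ] G} {P : G → G} {Q : F → F} {θ : ℝ}
  {u ubar : ℕ → E} {w : ℕ → G} {v z : ℕ → F} {uh : E} {wh : G} {vh : F}

theorem IsOrbit.ubar_succ_eq (horb : IsOrbit K A P Q θ u ubar w v z) (n : ℕ) :
    ubar (n + 1) = u (n + 1) + A.adjoint (w (n + 1) - w n) := by
  rw [horb.ubar_succ, horb.u_succ, map_sub A.adjoint]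
  abel

theorem IsOrbit.orbitLyapunov_succ_add_le (horb : IsOrbit K A P Q θ u ubar w v z)
    (hfix : IsFixedPoint K A P Q uh wh vh) (hP : FirmlyNonexpansive P)
    (hQ : FirmlyNonexpansive Q) (hK : ‖K‖ < 1) (hA : ‖A‖ < 1) (hθ0 : 0 < θ) (hθ1 : θ ≤ 1)
    (n : ℕ) :
    orbitLyapunov K A θ uh wh vh u w v z (n + 1)
        + lyapunovRate K A * ‖(u (n + 1) - u n, w (n + 1) - w n, K (u n) - z n)‖ ^ 2
      ≤ orbitLyapunov K A θ uh wh vh u w v z n := by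
  have hw := hP (w n + A (ubar (n + 1))) (wh + A uh)
  rw [← horb.w_succ, ← hfix.w_eq, horb.ubar_succ_eq] at hw
  have hz := hQ (K (u (n + 1)) + v n) (K uh + vh)
  rw [← horb.z_succ, ← hfix.z_eq] at hz
  have h := lyapunov_descent K A hK hA hθ0 hθ1 (u := u n - uh) (u' := u (n + 1) - uh)
    (w := w n - wh) (w' := w (n + 1) - wh) (v := v n - vh) (v' := v (n + 1) - vh)
    (r := K (u n) - z n) (r' := K (u (n + 1)) - z (n + 1)) ?_ ?_ ?_ ?_
  · rwa [sub_sub_sub_cancel_right, sub_sub_sub_cancel_right] at h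
  · rw [horb.u_succ]
    simp only [map_sub, map_add]
    linear_combination (norm := module) -hfix.adjoint_eq
  · convert hw using 3
    simp only [map_sub, map_add]
    abel
  · convert hz using 2 <;> simp only [map_sub] <;> abel_nf
  · rw [horb.v_succ]
    abel

theorem IsOrbit.antitone_orbitLyapunov (horb : IsOrbit K A P Q θ u ubar w v z)
    (hfix : IsFixedPoint K A P Q uh wh vh) (hP : FirmlyNonexpansive P)
    (hQ : FirmlyNonexpansive Q) (hK : ‖K‖ < 1) (hA : ‖A‖ < 1) (hθ0 : 0 < θ) (hθ1 : θ ≤ 1) :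
    Antitone (orbitLyapunov K A θ uh wh vh u w v z) :=
  antitone_nat_of_succ_le fun n =>
    (le_add_of_nonneg_right (mul_nonneg (lyapunovRate_pos hK hA).le (sq_nonneg _))).trans
      (horb.orbitLyapunov_succ_add_le hfix hP hQ hK hA hθ0 hθ1 n)

theorem IsOrbit.tendsto_increments (horb : IsOrbit K A P Q θ u ubar w v z)
    (hfix : IsFixedPoint K A P Q uh wh vh) (hP : FirmlyNonexpansive P)
    (hQ : FirmlyNonexpansive Q) (hK : ‖K‖ < 1) (hA : ‖A‖ < 1) (hθ0 : 0 < θ) (hθ1 : θ ≤ 1) :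
    Tendsto (fun n => (u (n + 1) - u n, w (n + 1) - w n, K (u n) - z n)) atTop (𝓝 0) := by
  set V := orbitLyapunov K A θ uh wh vh u w v z
  have hV : Tendsto V atTop (𝓝 (⨅ n, V n)) :=
    tendsto_atTop_ciInf (horb.antitone_orbitLyapunov hfix hP hQ hK hA hθ0 hθ1)
      ⟨0, Set.forall_mem_range.2 (orbitLyapunov_nonneg hK hA hθ0 hθ1)⟩
  refine tendsto_zero_of_mul_sq_norm_le (lyapunovRate_pos hK hA)
    (g := fun n => V n - V (n + 1)) (fun n => ?_) ?_
  · linarith [horb.orbitLyapunov_succ_add_le hfix hP hQ hK hA hθ0 hθ1 n]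
  · simpa using hV.sub (hV.comp (tendsto_add_atTop_nat 1))

theorem IsOrbit.isBounded_range (horb : IsOrbit K A P Q θ u ubar w v z)
    (hfix : IsFixedPoint K A P Q uh wh vh) (hP : FirmlyNonexpansive P)
    (hQ : FirmlyNonexpansive Q) (hK : ‖K‖ < 1) (hA : ‖A‖ < 1) (hθ0 : 0 < θ) (hθ1 : θ ≤ 1) :
    Bornology.IsBounded (Set.range fun n => (u n, w n, v n)) :=
  isBounded_range_of_mul_sq_norm_sub_le (lyapunovRate_pos hK hA) (uh, wh, vh) fun n =>
    (lyapunovRate_mul_le_orbitLyapunov hK hA hθ0 hθ1 n).trans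
      (horb.antitone_orbitLyapunov hfix hP hQ hK hA hθ0 hθ1 (Nat.zero_le n))

theorem IsOrbit.isFixedPoint_of_tendsto (horb : IsOrbit K A P Q θ u ubar w v z)
    (hP : Continuous P) (hQ : Continuous Q) {φ : ℕ → ℕ} (hφ : Tendsto φ atTop atTop)
    {ud : E} {wd : G} {vd : F}
    (hlim : Tendsto (fun k => (u (φ k), w (φ k), v (φ k))) atTop (𝓝 (ud, wd, vd)))
    (hinc : Tendsto (fun n => (u (n + 1) - u n, w (n + 1) - w n, K (u n) - z n)) atTop (𝓝 0)) :
    IsFixedPoint K A P Q ud wd vd := by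
  have hu := hlim.fst_nhds
  have hw := hlim.snd_nhds.fst_nhds
  have hv := hlim.snd_nhds.snd_nhds
  have hdu : Tendsto (fun k => u (φ k + 1) - u (φ k)) atTop (𝓝 0) := by
    simpa using (hinc.comp hφ).fst_nhds
  have hdw : Tendsto (fun k => w (φ k + 1) - w (φ k)) atTop (𝓝 0) := by
    simpa using (hinc.comp hφ).snd_nhds.fst_nhds
  have hr : Tendsto (fun k => K (u (φ k)) - z (φ k)) atTop (𝓝 0) := by
    simpa using (hinc.comp hφ).snd_nhds.snd_nhds
  have hr' : Tendsto (fun k => K (u (φ k + 1)) - z (φ k + 1)) atTop (𝓝 0) := by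
    simpa using (hinc.comp ((tendsto_add_atTop_nat 1).comp hφ)).snd_nhds.snd_nhds
  have hu' : Tendsto (fun k => u (φ k + 1)) atTop (𝓝 ud) := by simpa using hu.add hdu
  have hw' : Tendsto (fun k => w (φ k + 1)) atTop (𝓝 wd) := by simpa using hw.add hdw
  refine ⟨?_, ?_, ?_⟩
  · have hlim' := (hP.tendsto _).comp
      (hw.add ((A.continuous.tendsto _).comp (hu'.add ((A.adjoint.continuous.tendsto _).comp hdw))))
    refine (tendsto_nhds_unique hw' (hlim'.congr fun k => ?_)).trans (by simp)
    simp only [Function.comp_apply, ← horb.ubar_succ_eq, ← horb.w_succ]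
  · have hz : Tendsto (fun k => z (φ k + 1)) atTop (𝓝 (K ud)) := by
      simpa using ((K.continuous.tendsto _).comp hu').sub hr'
    refine tendsto_nhds_unique hz (((hQ.tendsto _).comp
      (((K.continuous.tendsto _).comp hu').add hv)).congr fun k => ?_)
    simp only [Function.comp_apply, ← horb.z_succ]
  · have hlim' := (hu.sub ((K.adjoint.continuous.tendsto _).comp (hv.add hr))).sub
      ((A.adjoint.continuous.tendsto _).comp hw')
    have heq := tendsto_nhds_unique hu' (hlim'.congr fun k => ?_)
    · rwa [add_zero, sub_sub, eq_comm, sub_eq_self] at heq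
    simp only [Function.comp_apply, horb.u_succ, add_sub_assoc]

theorem IsOrbit.tendsto_of_tendsto_subseq (horb : IsOrbit K A P Q θ u ubar w v z)
    {ud : E} {wd : G} {vd : F} (hfix : IsFixedPoint K A P Q ud wd vd)
    (hP : FirmlyNonexpansive P) (hQ : FirmlyNonexpansive Q) (hK : ‖K‖ < 1) (hA : ‖A‖ < 1)
    (hθ0 : 0 < θ) (hθ1 : θ ≤ 1) {φ : ℕ → ℕ} (hφ : Tendsto φ atTop atTop)
    (hlim : Tendsto (fun k => (u (φ k), w (φ k), v (φ k))) atTop (𝓝 (ud, wd, vd)))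
    (hr : Tendsto (fun n => K (u n) - z n) atTop (𝓝 0)) :
    Tendsto (fun n => (u n, w n, v n)) atTop (𝓝 (ud, wd, vd)) := by
  set V := orbitLyapunov K A θ ud wd vd u w v z
  have herr : Tendsto (fun k => (u (φ k) - ud, w (φ k) - wd, v (φ k) - vd,
      K (u (φ k)) - z (φ k))) atTop (𝓝 (0, 0, 0, 0)) := by
    simpa using (hlim.fst_nhds.sub_const ud).prodMk_nhds
      ((hlim.snd_nhds.fst_nhds.sub_const wd).prodMk_nhds
        ((hlim.snd_nhds.snd_nhds.sub_const vd).prodMk_nhds (hr.comp hφ)))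
  have hsub : Tendsto (V ∘ φ) atTop (𝓝 0) := by
    convert ((continuous_lyapunov K A θ ((3 + ‖K‖ ^ 2) / 4)).tendsto _).comp herr using 2
    · rfl
    · simp [lyapunov]
  have hV : Tendsto V atTop (𝓝 0) :=
    (tendsto_iff_tendsto_subseq_of_antitone
      (horb.antitone_orbitLyapunov hfix hP hQ hK hA hθ0 hθ1) hφ).2 hsub
  exact tendsto_sub_nhds_zero_iff.1 <| tendsto_zero_of_mul_sq_norm_le (lyapunovRate_pos hK hA)
    (lyapunovRate_mul_le_orbitLyapunov hK hA hθ0 hθ1) hV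

end Complete

section Proper

variable {E F G : Type*} [NormedAddCommGroup E] [InnerProductSpace ℝ E] [ProperSpace E]
  [NormedAddCommGroup F] [InnerProductSpace ℝ F] [ProperSpace F]
  [NormedAddCommGroup G] [InnerProductSpace ℝ G] [ProperSpace G]
  {K : E →L[ℝ] F} {A : E →L[ℝ] G} {P : G → G} {Q : F → F} {θ : ℝ}
  {u ubar : ℕ → E} {w : ℕ → G} {v z : ℕ → F} {uh : E} {wh : G} {vh : F}

theorem IsOrbit.exists_isFixedPoint_tendsto (horb : IsOrbit K A P Q θ u ubar w v z)
    (hfix : IsFixedPoint K A P Q uh wh vh) (hP : FirmlyNonexpansive P)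
    (hQ : FirmlyNonexpansive Q) (hK : ‖K‖ < 1) (hA : ‖A‖ < 1) (hθ0 : 0 < θ) (hθ1 : θ ≤ 1) :
    ∃ ud wd vd, IsFixedPoint K A P Q ud wd vd ∧ Tendsto u atTop (𝓝 ud) ∧
      Tendsto w atTop (𝓝 wd) ∧ Tendsto v atTop (𝓝 vd) ∧ Tendsto z atTop (𝓝 (K ud)) := by
  have hinc := horb.tendsto_increments hfix hP hQ hK hA hθ0 hθ1
  obtain ⟨⟨ud, wd, vd⟩, -, φ, hφ, hlim⟩ := tendsto_subseq_of_bounded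
    (horb.isBounded_range hfix hP hQ hK hA hθ0 hθ1) (Set.mem_range_self ·)
  have hfix' := horb.isFixedPoint_of_tendsto hP.continuous hQ.continuous hφ.tendsto_atTop hlim hinc
  have hr : Tendsto (fun n => K (u n) - z n) atTop (𝓝 0) := by
    simpa using hinc.snd_nhds.snd_nhds
  have hconv := horb.tendsto_of_tendsto_subseq hfix' hP hQ hK hA hθ0 hθ1 hφ.tendsto_atTop hlim hr
  refine ⟨ud, wd, vd, hfix', hconv.fst_nhds, hconv.snd_nhds.fst_nhds, hconv.snd_nhds.snd_nhds, ?_⟩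
  simpa using ((K.continuous.tendsto ud).comp hconv.fst_nhds).sub hr

end Proper

section Optimality

variable {E F : Type*} [NormedAddCommGroup E] [InnerProductSpace ℝ E] [CompleteSpace E]
  [NormedAddCommGroup F] [InnerProductSpace ℝ F] [CompleteSpace F] {p d : ℕ}

theorem IsFixedPoint.isMinOn {K : E →L[ℝ] F}
    {A : E →L[ℝ] PiLp 2 (fun _ : Fin p => EuclideanSpace ℝ (Fin d))} {y : F} {eps mu : ℝ}
    {ud : E} {wd : PiLp 2 (fun _ : Fin p => EuclideanSpace ℝ (Fin d))} {vd : F}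
    (hfix : IsFixedPoint K A (Pproj mu) (ballProj y eps) ud wd vd) (heps : 0 ≤ eps)
    (hmu : 0 < mu) :
    IsMinOn (fun u => ∑ i, ‖A u i‖) {u | ‖K u - y‖ ≤ eps} ud := by
  refine isMinOn_iff.2 fun u' hu' => le_of_mul_le_mul_left ?_ hmu
  have hdual : ∀ x, ⟪A x, wd⟫ = -⟪K x, vd⟫ := fun x => by
    rw [← ContinuousLinearMap.adjoint_inner_right, eq_neg_of_add_eq_zero_right hfix.adjoint_eq,
      inner_neg_right, ContinuousLinearMap.adjoint_inner_right]
  have hvar : ⟪K u', vd⟫ ≤ ⟪K ud, vd⟫ := by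
    have h := inner_sub_ballProj_nonpos y heps (K ud + vd) hu'
    rw [← hfix.z_eq, add_sub_cancel_left, inner_sub_right, real_inner_comm (K u'),
      real_inner_comm (K ud)] at h
    linarith
  calc mu * ∑ i, ‖A ud i‖ ≤ ⟪A ud, wd⟫ :=
        mul_sum_norm_le_inner_of_Pproj_add_eq hmu.le hfix.w_eq.symm
    _ = -⟪K ud, vd⟫ := hdual ud
    _ ≤ -⟪K u', vd⟫ := neg_le_neg hvar
    _ = ⟪A u', wd⟫ := (hdual u').symm
    _ ≤ mu * ∑ i, ‖A u' i‖ := hfix.w_eq ▸ inner_le_mul_sum_norm_of_Pproj hmu.le (wd + A ud) (A u')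

end Optimality

end GBPDNA

/-- **Theorem 2 of the paper (convergence of GBPDNA).** If the fixed-point system admits a
solution, then from any starting point the GBPDNA iterates converge to some fixed point
`(u†, w†, v†, z†)`, and `u†` minimizes the block `ℓ¹`-norm `‖Au‖₁` over `{u : ‖Ku − y‖ ≤ ε}`. -/
theorem stmt1 {N m p d : ℕ}
    (K : EuclideanSpace ℝ (Fin N) →L[ℝ] EuclideanSpace ℝ (Fin m))
    (A : EuclideanSpace ℝ (Fin N) →L[ℝ] PiLp 2 (fun _ : Fin p => EuclideanSpace ℝ (Fin d)))
    (hK : ‖K‖ < 1) (hA : ‖A‖ < 1)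
    (y : EuclideanSpace ℝ (Fin m)) (eps : ℝ) (heps : 0 ≤ eps) (mu : ℝ) (hmu : 0 < mu)
    (θ : ℝ) (hθ0 : 0 < θ) (hθ1 : θ ≤ 1)
    (u ubar : ℕ → EuclideanSpace ℝ (Fin N))
    (w : ℕ → PiLp 2 (fun _ : Fin p => EuclideanSpace ℝ (Fin d)))
    (v z : ℕ → EuclideanSpace ℝ (Fin m))
    (hubar : ∀ n, ubar (n + 1) = u n - K.adjoint (v n + K (u n) - z n) - A.adjoint (w n))
    (hw : ∀ n, w (n + 1) = Pproj mu (w n + A (ubar (n + 1))))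
    (hu : ∀ n, u (n + 1) = u n - K.adjoint (v n + K (u n) - z n) - A.adjoint (w (n + 1)))
    (hz : ∀ n, z (n + 1) = Qproj y eps (K (u (n + 1)) + v n))
    (hv : ∀ n, v (n + 1) = v n + θ • (K (u (n + 1)) - z (n + 1)))
    (uh : EuclideanSpace ℝ (Fin N))
    (wh : PiLp 2 (fun _ : Fin p => EuclideanSpace ℝ (Fin d)))
    (vh zh : EuclideanSpace ℝ (Fin m))
    (hfw : wh = Pproj mu (wh + A uh))
    (hfu : K.adjoint (vh + K uh - zh) + A.adjoint wh = 0)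
    (hfz : zh = Qproj y eps (K uh + vh))
    (hfv : K uh = zh)
    :
    ∃ (ud : EuclideanSpace ℝ (Fin N))
      (wd : PiLp 2 (fun _ : Fin p => EuclideanSpace ℝ (Fin d)))
      (vd zd : EuclideanSpace ℝ (Fin m)),
      wd = Pproj mu (wd + A ud) ∧
      K.adjoint (vd + K ud - zd) + A.adjoint wd = 0 ∧
      zd = Qproj y eps (K ud + vd) ∧
      K ud = zd ∧
      Tendsto u atTop (𝓝 ud) ∧
      Tendsto w atTop (𝓝 wd) ∧
      Tendsto v atTop (𝓝 vd) ∧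
      Tendsto z atTop (𝓝 zd) ∧
      ‖K ud - y‖ ≤ eps ∧
      (∀ u' : EuclideanSpace ℝ (Fin N), ‖K u' - y‖ ≤ eps →
        ∑ i, ‖(A ud) i‖ ≤ ∑ i, ‖(A u') i‖) := by
  simp only [Qproj_eq_ballProj] at hz hfz ⊢
  have horb : GBPDNA.IsOrbit K A (Pproj mu) (ballProj y eps) θ u ubar w v z :=
    ⟨hubar, hw, hu, hz, hv⟩
  have hfix : GBPDNA.IsFixedPoint K A (Pproj mu) (ballProj y eps) uh wh vh := by
    rw [hfv, add_sub_cancel_right] at hfu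
    exact ⟨hfw, hfv.trans hfz, hfu⟩
  obtain ⟨ud, wd, vd, hfix', hu, hw, hv, hz⟩ := horb.exists_isFixedPoint_tendsto hfix
    (firmlyNonexpansive_Pproj hmu.le) (firmlyNonexpansive_ballProj y heps) hK hA hθ0 hθ1
  refine ⟨ud, wd, vd, K ud, hfix'.w_eq, ?_, hfix'.z_eq, rfl, hu, hw, hv, hz,
    hfix'.z_eq ▸ norm_ballProj_sub_le y heps _, isMinOn_iff.1 (hfix'.isMinOn heps hmu)⟩
  rw [add_sub_cancel_right]
  exact hfix'.adjoint_eq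
end

section
/- If (û, ŵ, v̂, ẑ) satisfies the fixed-point system — i.e. ŵ = P_μ(ŵ + Aû), Kᵀ(v̂ + Kû − ẑ) + Aᵀŵ = 0, ẑ = Q_{y,ε}(Kû + v̂) and Kû = ẑ — then ‖Kû − y‖ ≤ ε and ‖Aû‖₁ ≤ ‖Au‖₁ for every u ∈ ℝ^N with ‖Ku − y‖ ≤ ε; that is, û minimizes ‖Au‖₁ subject to ‖Ku − y‖ ≤ ε. -/
/-!
The fixed-point system is the KKT system of the problem. Both projections are radial
retractions onto closed balls, and `x = proj_{B(0,r)}(x + v)` says exactly that `‖x‖ ≤ r` and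
`⟪x, v⟫ = r‖v‖`, i.e. `v` lies in the normal cone of the ball at `x`. Hence `ŵ` is a
subgradient of `μ‖·‖₁` at `Aû`, `v̂` is a normal vector to the feasible ball at `Kû`, and
`Aᵀŵ = -Kᵀv̂`. For feasible `u`,
`μ‖Aû‖₁ = ⟪ŵ, Aû⟫ = -⟪v̂, Kû⟫ ≤ -⟪v̂, Ku⟫ = ⟪ŵ, Au⟫ ≤ μ‖Au‖₁`.
-/

open RealInnerProductSpace

section ClosedBallProj

variable {E : Type*} [NormedAddCommGroup E] [InnerProductSpace ℝ E]

noncomputable def closedBallProj (r : ℝ) (x : E) : E :=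
  if r < ‖x‖ then (r / ‖x‖) • x else x

theorem norm_closedBallProj_le {r : ℝ} (hr : 0 ≤ r) (x : E) : ‖closedBallProj r x‖ ≤ r := by
  unfold closedBallProj
  split_ifs with hx
  · rw [norm_smul, Real.norm_of_nonneg (by positivity),
      div_mul_cancel₀ _ (hr.trans_lt hx).ne']
  · exact not_lt.mp hx

theorem inner_closedBallProj_sub_self (r : ℝ) (x : E) :
    ⟪closedBallProj r x, x - closedBallProj r x⟫ = r * ‖x - closedBallProj r x‖ := by
  unfold closedBallProj
  split_ifs with hx
  · rcases eq_or_ne x 0 with rfl | hx0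
    · simp
    have hxpos : 0 < ‖x‖ := norm_pos_iff.mpr hx0
    have hcoef : 0 ≤ 1 - r / ‖x‖ := by rw [sub_nonneg, div_le_one hxpos]; exact hx.le
    rw [show x - (r / ‖x‖) • x = (1 - r / ‖x‖) • x by rw [sub_smul, one_smul],
      real_inner_smul_left, real_inner_smul_right,
      real_inner_self_eq_norm_sq, norm_smul, Real.norm_of_nonneg hcoef]
    field_simp
  · simp

theorem norm_le_and_inner_eq_of_eq_closedBallProj {r : ℝ} (hr : 0 ≤ r) {x v : E}
    (h : x = closedBallProj r (x + v)) : ‖x‖ ≤ r ∧ ⟪x, v⟫ = r * ‖v‖ := by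
  refine ⟨h ▸ norm_closedBallProj_le hr _, ?_⟩
  simpa only [← h, add_sub_cancel_left] using inner_closedBallProj_sub_self r (x + v)

end ClosedBallProj

theorem Pproj_apply {d p : ℕ} (lam : ℝ) (w : PiLp 2 (fun _ : Fin p => EuclideanSpace ℝ (Fin d)))
    (i : Fin p) : Pproj lam w i = closedBallProj lam (w i) := rfl

theorem Qproj_eq {m : ℕ} (y : EuclideanSpace ℝ (Fin m)) (eps : ℝ) (v : EuclideanSpace ℝ (Fin m)) :
    Qproj y eps v = y + closedBallProj eps (v - y) := by
  unfold Qproj closedBallProj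
  split_ifs <;> abel

theorem inner_le_mul_sum_norm_of_forall_norm_le {ι : Type*} [Fintype ι] {β : ι → Type*}
    [∀ i, NormedAddCommGroup (β i)] [∀ i, InnerProductSpace ℝ (β i)] {r : ℝ}
    {w : PiLp 2 β} (hw : ∀ i, ‖w i‖ ≤ r) (b : PiLp 2 β) : ⟪w, b⟫ ≤ r * ∑ i, ‖b i‖ := by
  rw [PiLp.inner_apply, Finset.mul_sum]
  gcongr with i
  exact (real_inner_le_norm _ _).trans (mul_le_mul_of_nonneg_right (hw i) (norm_nonneg _))

theorem inner_eq_and_le_of_eq_Pproj {d p : ℕ} {mu : ℝ} (hmu : 0 ≤ mu)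
    {w a : PiLp 2 (fun _ : Fin p => EuclideanSpace ℝ (Fin d))} (h : w = Pproj mu (w + a)) :
    ⟪w, a⟫ = mu * ∑ i, ‖a i‖ ∧ ∀ b, ⟪w, b⟫ ≤ mu * ∑ i, ‖b i‖ := by
  have hblock i := norm_le_and_inner_eq_of_eq_closedBallProj hmu (congrFun (congrArg WithLp.ofLp h) i)
  refine ⟨?_, inner_le_mul_sum_norm_of_forall_norm_le fun i => (hblock i).1⟩
  rw [PiLp.inner_apply, Finset.mul_sum]
  exact Finset.sum_congr rfl fun i _ => (hblock i).2

theorem norm_sub_le_and_inner_sub_nonpos_of_eq_Qproj {m : ℕ} {y z v : EuclideanSpace ℝ (Fin m)}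
    {eps : ℝ} (heps : 0 ≤ eps) (h : z = Qproj y eps (z + v)) :
    ‖z - y‖ ≤ eps ∧ ∀ z', ‖z' - y‖ ≤ eps → ⟪v, z' - z⟫ ≤ 0 := by
  have h' : z - y = closedBallProj eps (z - y + v) := by
    rw [Qproj_eq] at h
    rw [sub_add_eq_add_sub, eq_sub_of_add_eq' h.symm]
  obtain ⟨hfeas, hinner⟩ := norm_le_and_inner_eq_of_eq_closedBallProj heps h'
  refine ⟨hfeas, fun z' hz' => ?_⟩
  have hz'_le : ⟪v, z' - y⟫ ≤ eps * ‖v‖ :=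
    (real_inner_le_norm _ _).trans (by rw [mul_comm]; gcongr)
  have hsplit : z' - z = (z' - y) - (z - y) := by abel
  rw [real_inner_comm] at hinner
  rw [hsplit, inner_sub_right, hinner]
  linarith

/-- If `(û, ŵ, v̂, ẑ)` satisfies the fixed-point system `ŵ = P_μ(ŵ + Aû)`,
`Kᵀ(v̂ + Kû − ẑ) + Aᵀŵ = 0`, `ẑ = Q_{y,ε}(Kû + v̂)`, `Kû = ẑ`, then `û` minimizes the block
`ℓ¹`-norm `‖Au‖₁ = Σᵢ ‖(Au)ᵢ‖₂` subject to the constraint `‖Ku − y‖ ≤ ε`. -/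
theorem stmt2 {N m p d : ℕ}
    (K : EuclideanSpace ℝ (Fin N) →L[ℝ] EuclideanSpace ℝ (Fin m))
    (A : EuclideanSpace ℝ (Fin N) →L[ℝ] PiLp 2 (fun _ : Fin p => EuclideanSpace ℝ (Fin d)))
    (y : EuclideanSpace ℝ (Fin m)) (eps : ℝ) (heps : 0 ≤ eps) (mu : ℝ) (hmu : 0 < mu)
    (uh : EuclideanSpace ℝ (Fin N))
    (wh : PiLp 2 (fun _ : Fin p => EuclideanSpace ℝ (Fin d)))
    (vh zh : EuclideanSpace ℝ (Fin m))
    (hfw : wh = Pproj mu (wh + A uh))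
    (hfu : K.adjoint (vh + K uh - zh) + A.adjoint wh = 0)
    (hfz : zh = Qproj y eps (K uh + vh))
    (hfv : K uh = zh) :
    ‖K uh - y‖ ≤ eps ∧
      ∀ u : EuclideanSpace ℝ (Fin N), ‖K u - y‖ ≤ eps →
        ∑ i, ‖(A uh) i‖ ≤ ∑ i, ‖(A u) i‖ := by
  subst hfv
  obtain ⟨hfeas, hnormal⟩ := norm_sub_le_and_inner_sub_nonpos_of_eq_Qproj heps hfz
  obtain ⟨hsub_eq, hsub_le⟩ := inner_eq_and_le_of_eq_Pproj hmu.le hfw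
  have hadj : A.adjoint wh = -K.adjoint vh := by
    rw [add_sub_cancel_right] at hfu
    exact eq_neg_of_add_eq_zero_right hfu
  have hwA v : ⟪wh, A v⟫ = -⟪vh, K v⟫ := by
    rw [← ContinuousLinearMap.adjoint_inner_left, hadj, inner_neg_left,
      ContinuousLinearMap.adjoint_inner_left]
  refine ⟨hfeas, fun u hu => le_of_mul_le_mul_left ?_ hmu⟩
  have hKu := hnormal (K u) hu
  rw [inner_sub_right] at hKu
  calc mu * ∑ i, ‖(A uh) i‖ = -⟪vh, K uh⟫ := by rw [← hsub_eq, hwA]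
    _ ≤ -⟪vh, K u⟫ := by linarith
    _ = ⟪wh, A u⟫ := (hwA u).symm
    _ ≤ mu * ∑ i, ‖(A u) i‖ := hsub_le _
end

section
/- Let (û, ŵ, v̂, ẑ) be a fixed point of the GBPDNA iteration and let (uⁿ, wⁿ, vⁿ, zⁿ) be generated by one step of the iteration. Then ‖u^{n+1} − û‖² ≤ ‖uⁿ − û‖² − ‖u^{n+1} − uⁿ‖² + ‖K(u^{n+1} − uⁿ)‖² − ‖K(uⁿ − û)‖² − ‖ẑ − zⁿ − K(û − u^{n+1})‖² + ‖zⁿ − ẑ‖² − 2⟨û − u^{n+1}, −Kᵀ(vⁿ − v̂) − Aᵀ(w^{n+1} − ŵ)⟩. -/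
/-!
For the errors `e = uⁿ - û`, `e' = u^{n+1} - û` the `u`-update reads
`e - e' = g + Kᵀ(K e - r)` with `g = Kᵀ(vⁿ - v̂) + Aᵀ(w^{n+1} - ŵ)` and `r = zⁿ - ẑ`, because the
fixed-point equations give `Kᵀ v̂ + Aᵀ ŵ = 0`. Expanding `‖e‖² = ‖e' + (e - e')‖²` and the two
squares `‖K(e' - e)‖²`, `‖K e' - r‖²` shows that the inequality is in fact an identity.
-/

open scoped RealInnerProductSpace
open Filter Topology

section

variable {E F G : Type*}
  [NormedAddCommGroup E] [InnerProductSpace ℝ E] [CompleteSpace E]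
  [NormedAddCommGroup F] [InnerProductSpace ℝ F] [CompleteSpace F]
  [NormedAddCommGroup G] [InnerProductSpace ℝ G] [CompleteSpace G]

theorem norm_sq_eq_of_sub_eq_add_adjoint (K : E →L[ℝ] F) {e e' g : E} {r : F}
    (h : e - e' = g + K.adjoint (K e - r)) :
    ‖e'‖ ^ 2 = ‖e‖ ^ 2 - ‖e' - e‖ ^ 2 + ‖K (e' - e)‖ ^ 2 - ‖K e‖ ^ 2
      - ‖K e' - r‖ ^ 2 + ‖r‖ ^ 2 - 2 * ⟪e', g⟫ := by
  have hcross : ⟪e', e - e'⟫ = ⟪e', g⟫ + ⟪K e', K e - r⟫ := by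
    rw [h, inner_add_right, ContinuousLinearMap.adjoint_inner_right]
  have he : ‖e‖ ^ 2 = ‖e'‖ ^ 2 + 2 * ⟪e', e - e'⟫ + ‖e' - e‖ ^ 2 := by
    rw [norm_sub_rev e' e, ← norm_add_sq_real, add_sub_cancel]
  rw [he, hcross, map_sub, norm_sub_sq_real (K e'), norm_sub_sq_real (K e'), inner_sub_right]
  ring

theorem sub_sub_eq_add_adjoint_of_update (K : E →L[ℝ] F) (A : E →L[ℝ] G)
    {u u' uh : E} {w' wh : G} {v z vh zh : F}
    (hu : u' = u - K.adjoint (v + K u - z) - A.adjoint w')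
    (hfu : K.adjoint (vh + K uh - zh) + A.adjoint wh = 0) (hfv : K uh = zh) :
    (u - uh) - (u' - uh) =
      (K.adjoint (v - vh) + A.adjoint (w' - wh)) + K.adjoint (K (u - uh) - (z - zh)) := by
  rw [hfv, add_sub_cancel_right] at hfu
  subst hu
  simp only [map_sub, map_add, hfv]
  linear_combination (norm := abel) hfu

end

theorem stmt16_general {N m p d : ℕ}
    (K : EuclideanSpace ℝ (Fin N) →L[ℝ] EuclideanSpace ℝ (Fin m))
    (A : EuclideanSpace ℝ (Fin N) →L[ℝ] PiLp 2 (fun _ : Fin p => EuclideanSpace ℝ (Fin d)))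
    (un unp1 : EuclideanSpace ℝ (Fin N))
    (wnp1 : PiLp 2 (fun _ : Fin p => EuclideanSpace ℝ (Fin d)))
    (vn zn : EuclideanSpace ℝ (Fin m))
    (hu : unp1 = un - K.adjoint (vn + K un - zn) - A.adjoint wnp1)
    (uh : EuclideanSpace ℝ (Fin N))
    (wh : PiLp 2 (fun _ : Fin p => EuclideanSpace ℝ (Fin d)))
    (vh zh : EuclideanSpace ℝ (Fin m))
    (hfu : K.adjoint (vh + K uh - zh) + A.adjoint wh = 0)
    (hfv : K uh = zh)
    :
    ‖unp1 - uh‖ ^ 2 ≤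
      ‖un - uh‖ ^ 2 - ‖unp1 - un‖ ^ 2 + ‖K (unp1 - un)‖ ^ 2 - ‖K (un - uh)‖ ^ 2
        - ‖zh - zn - K (uh - unp1)‖ ^ 2 + ‖zn - zh‖ ^ 2
        - 2 * ⟪uh - unp1, -K.adjoint (vn - vh) - A.adjoint (wnp1 - wh)⟫ := by
  have h := norm_sq_eq_of_sub_eq_add_adjoint K (sub_sub_eq_add_adjoint_of_update K A hu hfu hfv)
  have hr : zh - zn - K (uh - unp1) = K (unp1 - uh) - (zn - zh) := by
    simp only [map_sub]; abel
  have hg : ⟪uh - unp1, -K.adjoint (vn - vh) - A.adjoint (wnp1 - wh)⟫ =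
      ⟪unp1 - uh, K.adjoint (vn - vh) + A.adjoint (wnp1 - wh)⟫ := by
    rw [← inner_neg_neg, neg_sub]
    congr 1
    abel
  rw [sub_sub_sub_cancel_right] at h
  rw [hr, hg, h]

/-- One-step estimate for the `u`-variable (inequality (tempu) of the paper). -/
theorem stmt16 {N m p d : ℕ}
    (K : EuclideanSpace ℝ (Fin N) →L[ℝ] EuclideanSpace ℝ (Fin m))
    (A : EuclideanSpace ℝ (Fin N) →L[ℝ] PiLp 2 (fun _ : Fin p => EuclideanSpace ℝ (Fin d)))
    (hK : ‖K‖ < 1) (hA : ‖A‖ < 1)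
    (y : EuclideanSpace ℝ (Fin m)) (eps : ℝ) (heps : 0 ≤ eps) (mu : ℝ) (hmu : 0 < mu)
    (θ : ℝ) (hθ0 : 0 < θ) (hθ1 : θ ≤ 1)
    (un ubarnp1 unp1 : EuclideanSpace ℝ (Fin N))
    (wn wnp1 : PiLp 2 (fun _ : Fin p => EuclideanSpace ℝ (Fin d)))
    (vn vnp1 zn znp1 : EuclideanSpace ℝ (Fin m))
    (hubar : ubarnp1 = un - K.adjoint (vn + K un - zn) - A.adjoint wn)
    (hw : wnp1 = Pproj mu (wn + A ubarnp1))
    (hu : unp1 = un - K.adjoint (vn + K un - zn) - A.adjoint wnp1)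
    (hz : znp1 = Qproj y eps (K unp1 + vn))
    (hv : vnp1 = vn + θ • (K unp1 - znp1))
    (uh : EuclideanSpace ℝ (Fin N))
    (wh : PiLp 2 (fun _ : Fin p => EuclideanSpace ℝ (Fin d)))
    (vh zh : EuclideanSpace ℝ (Fin m))
    (hfw : wh = Pproj mu (wh + A uh))
    (hfu : K.adjoint (vh + K uh - zh) + A.adjoint wh = 0)
    (hfz : zh = Qproj y eps (K uh + vh))
    (hfv : K uh = zh)
    :
    ‖unp1 - uh‖ ^ 2 ≤
      ‖un - uh‖ ^ 2 - ‖unp1 - un‖ ^ 2 + ‖K (unp1 - un)‖ ^ 2 - ‖K (un - uh)‖ ^ 2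
        - ‖zh - zn - K (uh - unp1)‖ ^ 2 + ‖zn - zh‖ ^ 2
        - 2 * ⟪uh - unp1, -K.adjoint (vn - vh) - A.adjoint (wnp1 - wh)⟫ :=
  stmt16_general K A un unp1 wnp1 vn zn hu uh wh vh zh hfu hfv
end

section
/- Let (û, ŵ, v̂, ẑ) be a fixed point of the GBPDNA iteration and let (uⁿ, wⁿ, vⁿ, zⁿ) be generated by one step of the iteration. Then 0 ≤ −‖z^{n+1} − ẑ‖² − θ⁻²‖v^{n+1} − vⁿ‖² + ‖K(u^{n+1} − û)‖² + 2⟨z^{n+1} − ẑ, vⁿ − v̂⟩. -/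
open scoped RealInnerProductSpace
open Filter Topology

/-!
`Qproj y ε` is the metric projection onto the closed ball of radius `ε` about `y`, so it obeys
the variational inequality of convex projections and is therefore firmly nonexpansive:
`‖Q a - Q b‖² ≤ ⟪Q a - Q b, a - b⟫`. Apply this to `a = K u^{n+1} + vⁿ` and `b = K û + v̂`,
and use `Kû = ẑ` to write `θ⁻¹ (v^{n+1} - vⁿ) = K (u^{n+1} - û) - (z^{n+1} - ẑ)`; expanding
the square turns firm nonexpansiveness into the claimed inequality.
-/

section FirmlyNonexpansive

variable {E : Type*} [NormedAddCommGroup E] [InnerProductSpace ℝ E]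

theorem sq_norm_sub_le_inner_of_inner_nonpos {a b p q : E}
    (hp : ⟪a - p, q - p⟫ ≤ 0) (hq : ⟪b - q, p - q⟫ ≤ 0) :
    ‖p - q‖ ^ 2 ≤ ⟪p - q, a - b⟫ := by
  have hsum : 0 ≤ ⟪(a - b) - (p - q), p - q⟫ := by
    have hqp : q - p = -(p - q) := (neg_sub p q).symm
    rw [hqp, inner_neg_right] at hp
    have hab : (a - b) - (p - q) = (a - p) - (b - q) := by abel
    rw [hab, inner_sub_left]
    linarith
  rw [inner_sub_left, real_inner_self_eq_norm_sq, real_inner_comm] at hsum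
  linarith

theorem sq_norm_add_sq_norm_sub_le_of_sq_norm_le_inner {x z w : E}
    (h : ‖z‖ ^ 2 ≤ ⟪z, x + w⟫) :
    ‖z‖ ^ 2 + ‖x - z‖ ^ 2 ≤ ‖x‖ ^ 2 + 2 * ⟪z, w⟫ := by
  rw [norm_sub_sq_real, real_inner_comm z x]
  rw [inner_add_right] at h
  linarith

end FirmlyNonexpansive

section Qproj

variable {m : ℕ} {y : EuclideanSpace ℝ (Fin m)} {eps : ℝ}

theorem norm_Qproj_sub_le (heps : 0 ≤ eps) (v : EuclideanSpace ℝ (Fin m)) :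
    ‖Qproj y eps v - y‖ ≤ eps := by
  unfold Qproj
  split_ifs with h
  · have hr : 0 < ‖v - y‖ := heps.trans_lt h
    rw [add_sub_cancel_left, norm_smul, Real.norm_of_nonneg (div_nonneg heps hr.le),
      div_mul_cancel₀ _ hr.ne']
  · exact not_lt.mp h

theorem inner_sub_Qproj_nonpos (heps : 0 ≤ eps) (v : EuclideanSpace ℝ (Fin m))
    {c : EuclideanSpace ℝ (Fin m)} (hc : ‖c - y‖ ≤ eps) :
    ⟪v - Qproj y eps v, c - Qproj y eps v⟫ ≤ 0 := by
  unfold Qproj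
  split_ifs with h
  · set r := ‖v - y‖
    have hr : 0 < r := heps.trans_lt h
    have hv : v - (y + (eps / r) • (v - y)) = (1 - eps / r) • (v - y) := by
      rw [sub_smul, one_smul]; abel
    have hc' : c - (y + (eps / r) • (v - y)) = (c - y) - (eps / r) • (v - y) := by abel
    have hcoef : 0 ≤ 1 - eps / r := by rw [sub_nonneg, div_le_one hr]; exact h.le
    have hcs : ⟪v - y, c - y⟫ ≤ r * eps :=
      (real_inner_le_norm _ _).trans (mul_le_mul_of_nonneg_left hc hr.le)
    have hrr : eps / r * r ^ 2 = r * eps := by field_simp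
    rw [hv, hc', real_inner_smul_left, inner_sub_right, real_inner_smul_right,
      real_inner_self_eq_norm_sq, hrr]
    exact mul_nonpos_of_nonneg_of_nonpos hcoef (by linarith)
  · simp

theorem sq_norm_Qproj_sub_le_inner (heps : 0 ≤ eps) (a b : EuclideanSpace ℝ (Fin m)) :
    ‖Qproj y eps a - Qproj y eps b‖ ^ 2 ≤ ⟪Qproj y eps a - Qproj y eps b, a - b⟫ :=
  sq_norm_sub_le_inner_of_inner_nonpos
    (inner_sub_Qproj_nonpos heps a (norm_Qproj_sub_le heps b))
    (inner_sub_Qproj_nonpos heps b (norm_Qproj_sub_le heps a))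

end Qproj

theorem stmt17_general {N m : ℕ}
    (K : EuclideanSpace ℝ (Fin N) →L[ℝ] EuclideanSpace ℝ (Fin m))
    (y : EuclideanSpace ℝ (Fin m)) (eps : ℝ) (heps : 0 ≤ eps)
    (θ : ℝ) (hθ0 : 0 < θ)
    (unp1 : EuclideanSpace ℝ (Fin N))
    (vn vnp1 znp1 : EuclideanSpace ℝ (Fin m))
    (hz : znp1 = Qproj y eps (K unp1 + vn))
    (hv : vnp1 = vn + θ • (K unp1 - znp1))
    (uh : EuclideanSpace ℝ (Fin N))
    (vh zh : EuclideanSpace ℝ (Fin m))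
    (hfz : zh = Qproj y eps (K uh + vh))
    (hfv : K uh = zh)
    :
    0 ≤ -‖znp1 - zh‖ ^ 2 - θ⁻¹ ^ 2 * ‖vnp1 - vn‖ ^ 2 + ‖K (unp1 - uh)‖ ^ 2
        + 2 * ⟪znp1 - zh, vn - vh⟫ := by
  have hfirm : ‖znp1 - zh‖ ^ 2 ≤ ⟪znp1 - zh, K (unp1 - uh) + (vn - vh)⟫ := by
    have hab : K (unp1 - uh) + (vn - vh) = (K unp1 + vn) - (K uh + vh) := by
      rw [map_sub]; abel
    rw [hab, hz, hfz]
    exact sq_norm_Qproj_sub_le_inner heps _ _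
  have hstep : θ⁻¹ ^ 2 * ‖vnp1 - vn‖ ^ 2 = ‖K (unp1 - uh) - (znp1 - zh)‖ ^ 2 := by
    have hdiff : vnp1 - vn = θ • (K (unp1 - uh) - (znp1 - zh)) := by
      rw [hv, add_sub_cancel_left, map_sub, hfv, sub_sub_sub_cancel_right]
    rw [hdiff, norm_smul, Real.norm_of_nonneg hθ0.le, mul_pow, ← mul_assoc, ← mul_pow,
      inv_mul_cancel₀ hθ0.ne', one_pow, one_mul]
  rw [hstep]
  linarith [sq_norm_add_sq_norm_sub_le_of_sq_norm_le_inner hfirm]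

/-- One-step estimate for the `z`-variable (inequality (tempz) of the paper). -/
theorem stmt17 {N m p d : ℕ}
    (K : EuclideanSpace ℝ (Fin N) →L[ℝ] EuclideanSpace ℝ (Fin m))
    (A : EuclideanSpace ℝ (Fin N) →L[ℝ] PiLp 2 (fun _ : Fin p => EuclideanSpace ℝ (Fin d)))
    (hK : ‖K‖ < 1) (hA : ‖A‖ < 1)
    (y : EuclideanSpace ℝ (Fin m)) (eps : ℝ) (heps : 0 ≤ eps) (mu : ℝ) (hmu : 0 < mu)
    (θ : ℝ) (hθ0 : 0 < θ) (hθ1 : θ ≤ 1)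
    (un ubarnp1 unp1 : EuclideanSpace ℝ (Fin N))
    (wn wnp1 : PiLp 2 (fun _ : Fin p => EuclideanSpace ℝ (Fin d)))
    (vn vnp1 zn znp1 : EuclideanSpace ℝ (Fin m))
    (hubar : ubarnp1 = un - K.adjoint (vn + K un - zn) - A.adjoint wn)
    (hw : wnp1 = Pproj mu (wn + A ubarnp1))
    (hu : unp1 = un - K.adjoint (vn + K un - zn) - A.adjoint wnp1)
    (hz : znp1 = Qproj y eps (K unp1 + vn))
    (hv : vnp1 = vn + θ • (K unp1 - znp1))
    (uh : EuclideanSpace ℝ (Fin N))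
    (wh : PiLp 2 (fun _ : Fin p => EuclideanSpace ℝ (Fin d)))
    (vh zh : EuclideanSpace ℝ (Fin m))
    (hfw : wh = Pproj mu (wh + A uh))
    (hfu : K.adjoint (vh + K uh - zh) + A.adjoint wh = 0)
    (hfz : zh = Qproj y eps (K uh + vh))
    (hfv : K uh = zh)
    :
    0 ≤ -‖znp1 - zh‖ ^ 2 - θ⁻¹ ^ 2 * ‖vnp1 - vn‖ ^ 2 + ‖K (unp1 - uh)‖ ^ 2
        + 2 * ⟪znp1 - zh, vn - vh⟫ :=
  stmt17_general K y eps heps θ hθ0 unp1 vn vnp1 znp1 hz hv uh vh zh hfz hfv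
end
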